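/- For every complex number a with Im(a) < 0 and every real x > 0, ∫_{-∞}^{∞} e^{-x s²}/(s - a) ds = -iπ·e^{-x a²}·erfc(i·√x·a). -/

import Mathlib

open Complex MeasureTheory

/-- The complementary error function, `erfc z = 1 - (2/√π)∫_0^z e^{-w²} dw`,
with the path integral from `0` to `z` parametrized along the segment. -/
noncomputable def erfc (z : ℂ) : ℂ :=
  1 - (2 / Real.sqrt Real.pi : ℝ) *
    ∫ t in (0 : ℝ)..1, z * Complex.exp (-((t : ℂ) * z) ^ 2)

/-!
Since `Im a < 0`, `1/(s - a) = -i ∫₀^∞ e^{i(s-a)t} dt`. Exchanging the two integrals, the inner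
`s`-integral is the Fourier transform of the Gaussian, `√(π/x) e^{-t²/4x}`, and the substitution
`t = 2√x u` turns what remains into `e^{c²} ∫₀^∞ e^{-(u+c)²} du` with `c = i√x a`. Finally, for
every `c ∈ ℂ`, `∫₀^∞ e^{-(u+c)²} du = (√π/2) erfc c`: with `F` a primitive of the entire function
`e^{-w²}`, the left side is `lim F(r + c) - F(c)`, and `F(r + c) - F(r) → 0` because the Gaussian
decays uniformly on the vertical segment `[r, r + c]`.
-/

open Set Filter Topology
open scoped Real

theorem integral_segment_eq_sub_of_hasDerivAt {f F : ℂ → ℂ} (hF : ∀ z, HasDerivAt F (f z) z)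
    (hf : Continuous f) (p v : ℂ) (a b : ℝ) :
    ∫ t in a..b, v * f (p + t * v) = F (p + b * v) - F (p + a * v) := by
  have hderiv : ∀ t ∈ uIcc a b,
      HasDerivAt (fun t : ℝ => F (p + t * v)) (v * f (p + t * v)) t := by
    intro t _
    have h := (hF (p + t * v)).comp (t : ℂ) (((hasDerivAt_id (t : ℂ)).mul_const v).const_add p)
    simpa [mul_comm v] using h.comp_ofReal
  exact intervalIntegral.integral_eq_sub_of_hasDerivAt hderiv
    (by apply Continuous.intervalIntegrable; fun_prop)

theorem erfc_eq_of_hasDerivAt {F : ℂ → ℂ} (hF : ∀ z, HasDerivAt F (cexp (-z ^ 2)) z) (z : ℂ) :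
    erfc z = 1 - (2 / √π : ℝ) * (F z - F 0) := by
  have h := integral_segment_eq_sub_of_hasDerivAt hF (by fun_prop) 0 z 0 1
  simp only [zero_add, Complex.ofReal_one, Complex.ofReal_zero, one_mul, zero_mul] at h
  rw [erfc, ← h]

theorem norm_cexp_neg_sq_add_mul_le (c : ℂ) (r : ℝ) {s : ℝ} (hs : |s| ≤ 1) :
    ‖cexp (-((r : ℂ) + s * c) ^ 2)‖ ≤ Real.exp (‖c‖ ^ 2 - r ^ 2 / 2) := by
  rw [Complex.norm_exp, Real.exp_le_exp, Complex.sq_norm, Complex.normSq_apply]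
  have hs2 : s ^ 2 ≤ 1 := by nlinarith [abs_nonneg s, sq_abs s]
  simp only [neg_re, sq, mul_re, add_re, add_im, mul_im, ofReal_re, ofReal_im]
  nlinarith [sq_nonneg (r + 2 * s * c.re), mul_nonneg (sub_nonneg.2 hs2) (sq_nonneg c.re),
    mul_nonneg (sub_nonneg.2 hs2) (sq_nonneg c.im)]

theorem tendsto_integral_cexp_neg_sq_vertical (c : ℂ) :
    Tendsto (fun r : ℝ => ∫ s in (0 : ℝ)..1, c * cexp (-((r : ℂ) + s * c) ^ 2)) atTop (𝓝 0) := by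
  refine squeeze_zero_norm (fun r => ?_) (a := fun r => ‖c‖ * Real.exp (‖c‖ ^ 2 - r ^ 2 / 2)) ?_
  · refine (intervalIntegral.norm_integral_le_of_norm_le_const
      (C := ‖c‖ * Real.exp (‖c‖ ^ 2 - r ^ 2 / 2)) fun s hs => ?_).trans_eq (by simp)
    have hs' : |s| ≤ 1 := by
      rw [uIoc_of_le zero_le_one] at hs
      exact abs_le.2 ⟨by linarith [hs.1], hs.2⟩
    rw [norm_mul]
    exact mul_le_mul_of_nonneg_left (norm_cexp_neg_sq_add_mul_le c r hs') (norm_nonneg c)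
  · have h : Tendsto (fun r : ℝ => ‖c‖ ^ 2 - r ^ 2 / 2) atTop atBot :=
      tendsto_atBot_add_const_left _ _ <| tendsto_neg_atTop_atBot.comp <|
        (tendsto_pow_atTop two_ne_zero).atTop_div_const two_pos
    simpa using (Real.tendsto_exp_atBot.comp h).const_mul ‖c‖

theorem integral_Ioi_cexp_neg_sq : ∫ u in Ioi (0 : ℝ), cexp (-(u : ℂ) ^ 2) = (√π : ℂ) / 2 := by
  have h := integral_gaussian_Ioi 1
  simp only [neg_mul, one_mul, div_one] at h
  rw [← Complex.ofReal_ofNat, ← Complex.ofReal_div, ← h, ← integral_complex_ofReal]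
  push_cast
  rfl

theorem integrable_cexp_neg_add_sq (c : ℂ) :
    Integrable fun u : ℝ => cexp (-((u : ℂ) + c) ^ 2) :=
  (integrable_cexp_quadratic (b := 1) (by simp) (-2 * c) (-c ^ 2)).congr
    (ae_of_all _ fun u => by ring_nf)

theorem integral_Ioi_cexp_neg_add_sq (c : ℂ) :
    ∫ u in Ioi (0 : ℝ), cexp (-((u : ℂ) + c) ^ 2) = √π / 2 * erfc c := by
  obtain ⟨F, hF⟩ := (by fun_prop : Differentiable ℂ fun z : ℂ => cexp (-z ^ 2)).isExactOn_univ
  replace hF : ∀ z, HasDerivAt F (cexp (-z ^ 2)) z := fun z => hF z (mem_univ z)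
  have hcont : Continuous fun z : ℂ => cexp (-z ^ 2) := by fun_prop
  have h_shifted : Tendsto (fun r : ℝ => F (r + c) - F c) atTop
      (𝓝 (∫ u in Ioi (0 : ℝ), cexp (-((u : ℂ) + c) ^ 2))) := by
    refine (intervalIntegral_tendsto_integral_Ioi 0 (integrable_cexp_neg_add_sq c).integrableOn
      tendsto_id).congr fun r => ?_
    simpa [add_comm] using integral_segment_eq_sub_of_hasDerivAt hF hcont c 1 0 r
  have h_vertical : Tendsto (fun r : ℝ => F (r + c) - F r) atTop (𝓝 0) := by
    refine (tendsto_integral_cexp_neg_sq_vertical c).congr fun r => ?_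
    simpa using integral_segment_eq_sub_of_hasDerivAt hF hcont r c 0 1
  have h_real : Tendsto (fun r : ℝ => F r - F 0) atTop (𝓝 ((√π : ℂ) / 2)) := by
    rw [← integral_Ioi_cexp_neg_sq]
    refine (intervalIntegral_tendsto_integral_Ioi 0
      (by simpa using (integrable_cexp_neg_add_sq 0).integrableOn) tendsto_id).congr fun r => ?_
    simpa using integral_segment_eq_sub_of_hasDerivAt hF hcont 0 1 0 r
  have h_lim := tendsto_nhds_unique h_shifted
    ((h_vertical.add h_real).sub_const (F c - F 0) |>.congr fun r => by ring)
  have hpi : (√π : ℂ) ≠ 0 := by exact_mod_cast (Real.sqrt_pos.2 Real.pi_pos).ne'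
  rw [h_lim, erfc_eq_of_hasDerivAt hF]
  push_cast
  field_simp
  ring

theorem inv_eq_neg_I_mul_integral_Ioi {z : ℂ} (hz : 0 < z.im) :
    z⁻¹ = -I * ∫ t in Ioi (0 : ℝ), cexp (I * z * t) := by
  have hz0 : z ≠ 0 := fun h => by simp [h] at hz
  rw [integral_exp_mul_complex_Ioi (by simpa using hz) 0]
  field_simp
  simp

theorem integrable_cexp_neg_mul_sq_mul_cexp_I_mul {x : ℝ} (hx : 0 < x) {a : ℂ} (ha : a.im < 0) :
    Integrable (fun p : ℝ × ℝ => cexp (-x * p.1 ^ 2) * cexp (I * (p.1 - a) * p.2))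
      (volume.prod (volume.restrict (Ioi 0))) := by
  have hbound : Integrable (fun p : ℝ × ℝ => Real.exp (-x * p.1 ^ 2) * Real.exp (a.im * p.2))
      (volume.prod (volume.restrict (Ioi 0))) := by
    simpa only [neg_neg] using
      (integrable_exp_neg_mul_sq hx).mul_prod (exp_neg_integrableOn_Ioi 0 (neg_pos.2 ha))
  refine hbound.mono' (by fun_prop) (ae_of_all _ fun p => le_of_eq ?_)
  rw [norm_mul, Complex.norm_exp, Complex.norm_exp]
  congr 2 <;> simp [← Complex.ofReal_pow]

theorem integral_cexp_neg_mul_sq_div_sub {x : ℝ} (hx : 0 < x) {a : ℂ} (ha : a.im < 0) :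
    ∫ s : ℝ, cexp (-x * s ^ 2) / (s - a) =
      -I * ∫ t in Ioi (0 : ℝ),
        cexp (-(I * a) * t) * ∫ s : ℝ, cexp (I * t * s) * cexp (-x * s ^ 2) := by
  have hpole : ∀ s : ℝ, cexp (-x * s ^ 2) / (s - a) =
      -I * ∫ t in Ioi (0 : ℝ), cexp (-x * s ^ 2) * cexp (I * (s - a) * t) := by
    intro s
    rw [div_eq_mul_inv, inv_eq_neg_I_mul_integral_Ioi (by simpa using ha), integral_const_mul]
    ring
  simp_rw [hpole]
  rw [integral_const_mul, integral_integral_swap (integrable_cexp_neg_mul_sq_mul_cexp_I_mul hx ha)]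
  congr 1
  refine setIntegral_congr_fun measurableSet_Ioi fun t _ => ?_
  rw [← integral_const_mul]
  congr 1 with s
  simp only [← Complex.exp_add]
  ring_nf

theorem integral_Ioi_cexp_mul_cexp_neg_sq_div {x : ℝ} (hx : 0 < x) (b : ℂ) :
    ∫ t in Ioi (0 : ℝ), cexp (-b * t) * cexp (-t ^ 2 / (4 * x)) =
      2 * √x * cexp (x * b ^ 2) * ∫ u in Ioi (0 : ℝ), cexp (-((u : ℂ) + √x * b) ^ 2) := by
  have h2sx : 0 < 2 * √x := by positivity
  have hsub := integral_comp_mul_left_Ioi'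
    (fun t : ℝ => cexp (-b * t) * cexp (-t ^ 2 / (4 * x))) 0 h2sx
  rw [mul_zero] at hsub
  rw [← hsub, Complex.real_smul, mul_assoc, ← integral_const_mul (cexp (x * b ^ 2))]
  push_cast
  congr 1
  refine setIntegral_congr_fun measurableSet_Ioi fun (u : ℝ) _ => ?_
  have hsq : (√x : ℂ) ^ 2 = x := by exact_mod_cast Real.sq_sqrt hx.le
  have hx0 : (x : ℂ) ≠ 0 := by exact_mod_cast hx.ne'
  rw [← Complex.exp_add, ← Complex.exp_add]
  congr 1
  field_simp
  linear_combination (4 * x * b ^ 2 - 4 * (u : ℂ) ^ 2) * hsq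

/-- For `Im a < 0` and `x > 0`,
`∫_ℝ e^{-x s²}/(s - a) ds = -iπ e^{-x a²} erfc(i√x a)`. -/
theorem integral_gaussian_pole_neg (a : ℂ) (ha : a.im < 0) (x : ℝ) (hx : 0 < x) :
    (∫ s : ℝ, Complex.exp (-(x : ℂ) * (s : ℂ) ^ 2) / ((s : ℂ) - a)) =
      -Complex.I * Real.pi * Complex.exp (-(x : ℂ) * a ^ 2) *
        erfc (Complex.I * (Real.sqrt x : ℂ) * a) := by
  have hroot : ((π : ℂ) / x) ^ (1 / 2 : ℂ) = √π / √x := by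
    rw [← Complex.ofReal_div, ← Complex.ofReal_one, ← Complex.ofReal_ofNat, ← Complex.ofReal_div,
      ← Complex.ofReal_cpow (by positivity), ← Real.sqrt_eq_rpow, Real.sqrt_div' _ hx.le,
      Complex.ofReal_div]
  have hsx : (√x : ℂ) ≠ 0 := by exact_mod_cast (Real.sqrt_pos.2 hx).ne'
  have hsπ : (√π : ℂ) ^ 2 = π := by exact_mod_cast Real.sq_sqrt Real.pi_pos.le
  calc (∫ s : ℝ, cexp (-x * s ^ 2) / (s - a))
      = -I * ∫ t in Ioi (0 : ℝ),
          cexp (-(I * a) * t) * ∫ s : ℝ, cexp (I * t * s) * cexp (-x * s ^ 2) :=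
        integral_cexp_neg_mul_sq_div_sub hx ha
    _ = -I * ((π / x) ^ (1 / 2 : ℂ) *
          ∫ t in Ioi (0 : ℝ), cexp (-(I * a) * t) * cexp (-t ^ 2 / (4 * x))) := by
        simp_rw [fourierIntegral_gaussian (by simpa using hx : 0 < (x : ℂ).re)]
        rw [← integral_const_mul ((π / x : ℂ) ^ (1 / 2 : ℂ))]
        congr 1
        refine setIntegral_congr_fun measurableSet_Ioi fun (t : ℝ) _ => ?_
        ring
    _ = -I * π * cexp (-x * a ^ 2) * erfc (I * √x * a) := by
        rw [integral_Ioi_cexp_mul_cexp_neg_sq_div hx, integral_Ioi_cexp_neg_add_sq, hroot,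
          show (√x : ℂ) * (I * a) = I * √x * a by ring]
        field_simp
        rw [I_sq, hsπ]
        ring_nf
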